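/- For μ > 0, let I_μ be a random variable with the GIG(0; √μ, √μ) distribution, i.e., density (2K_0(μ))^{-1} v^{-1} exp(−(μ/v + μv)/2) on (0, ∞). Then I_μ converges in distribution to the constant 1 as μ → ∞: for every bounded continuous f : (0,∞) → ℝ, E[f(I_μ)] → f(1). -/

import Mathlib

/-!
Substituting `v = exp x` turns the law of `I_μ` into that of `log I_μ`, whose density
`exp (-μ cosh x) / (2 K₀(μ))` on `ℝ` has to concentrate at `0`. Since `cosh` increases
in `|x|`, the unnormalised mass outside `(-δ, δ)` is at most `exp (-(μ - 1) cosh δ) · 2 K₀(1)`,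
while `2 K₀(μ) ≥ (δ / 2) exp (-μ cosh (δ / 2))`; the ratio decays like
`exp (-μ (cosh δ - cosh (δ / 2)))`.
Averaging a bounded function continuous at `0` against such a concentrating family of
probability densities gives its value at `0`.
-/

open MeasureTheory Real Set Filter

/-- The Macdonald function of order zero, via its integral representation. -/
noncomputable def K0 (a : ℝ) : ℝ := (1 / 2) * ∫ x : ℝ, Real.exp (-a * Real.cosh x)

open Metric Topology

section Concentration

variable {α ι : Type*} [MeasurableSpace α] {ν : Measure α} {F : α → ℝ} {M : ℝ}

lemma abs_integral_mul_sub_le {q : α → ℝ} (hq : 0 ≤ q) (hq_int : Integrable q ν)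
    (hq_one : ∫ x, q x ∂ν = 1) (hF : AEStronglyMeasurable F ν) (hM : ∀ x, |F x| ≤ M)
    {s : Set α} (hs : MeasurableSet s) {c η : ℝ} (hc : |c| ≤ M) (hη : 0 ≤ η)
    (hFs : ∀ x ∈ s, |F x - c| ≤ η) :
    |∫ x, q x * F x ∂ν - c| ≤ η + 2 * M * ∫ x in sᶜ, q x ∂ν := by
  have hM₀ : 0 ≤ M := (abs_nonneg c).trans hc
  have hqF : Integrable (fun x => q x * F x) ν :=
    hq_int.mul_bdd hF (.of_forall fun x => (Real.norm_eq_abs _).trans_le (hM x))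
  have hbound_int : Integrable (fun x => η * q x + 2 * M * sᶜ.indicator q x) ν :=
    (hq_int.const_mul η).add ((hq_int.indicator hs.compl).const_mul (2 * M))
  have hcentre : ∫ x, q x * F x ∂ν - c = ∫ x, q x * (F x - c) ∂ν := by
    simp_rw [mul_sub]
    rw [integral_sub hqF (hq_int.mul_const c), integral_mul_const, hq_one, one_mul]
  calc |∫ x, q x * F x ∂ν - c|
      ≤ ∫ x, (η * q x + 2 * M * sᶜ.indicator q x) ∂ν := by
        rw [hcentre, ← Real.norm_eq_abs]
        refine norm_integral_le_of_norm_le hbound_int (.of_forall fun x => ?_)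
        have hqx : 0 ≤ q x := hq x
        rw [Real.norm_eq_abs, abs_mul, abs_of_nonneg hqx]
        by_cases hx : x ∈ s
        · have : 0 ≤ 2 * M * sᶜ.indicator q x :=
            mul_nonneg (by positivity) (indicator_nonneg (fun y _ => hq y) x)
          nlinarith [hFs x hx]
        · have hFc : |F x - c| ≤ 2 * M := (abs_sub _ _).trans (by linarith [hM x])
          rw [indicator_of_mem (mem_compl hx)]
          nlinarith
    _ = η + 2 * M * ∫ x in sᶜ, q x ∂ν := by
        rw [integral_add (hq_int.const_mul η) ((hq_int.indicator hs.compl).const_mul (2 * M)),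
          integral_const_mul, integral_const_mul, hq_one, integral_indicator hs.compl, mul_one]

theorem tendsto_integral_mul_of_tendsto_setIntegral_compl_ball [PseudoMetricSpace α]
    [OpensMeasurableSpace α] {l : Filter ι} {p : ι → α → ℝ}
    {x₀ : α} (hp_nonneg : ∀ᶠ i in l, 0 ≤ p i) (hp_int : ∀ᶠ i in l, Integrable (p i) ν)
    (hp_one : ∀ᶠ i in l, ∫ x, p i x ∂ν = 1)
    (hp_tail : ∀ δ > 0, Tendsto (fun i => ∫ x in (ball x₀ δ)ᶜ, p i x ∂ν) l (𝓝 0))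
    (hF : AEStronglyMeasurable F ν) (hM : ∀ x, |F x| ≤ M) (hF₀ : ContinuousAt F x₀) :
    Tendsto (fun i => ∫ x, p i x * F x ∂ν) l (𝓝 (F x₀)) := by
  rw [Metric.tendsto_nhds]
  intro ε hε
  obtain ⟨δ, hδ, hFδ⟩ := Metric.continuousAt_iff.1 hF₀ (ε / 2) (half_pos hε)
  have hbound : Tendsto (fun i => ε / 2 + 2 * M * ∫ x in (ball x₀ δ)ᶜ, p i x ∂ν) l
      (𝓝 (ε / 2)) := by
    simpa using tendsto_const_nhds.add ((hp_tail δ hδ).const_mul (2 * M))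
  filter_upwards [hp_nonneg, hp_int, hp_one, hbound.eventually_lt_const (half_lt_self hε)]
    with i hi₀ hi hi₁ hlt
  rw [Real.dist_eq]
  refine (abs_integral_mul_sub_le hi₀ hi hi₁ hF hM measurableSet_ball (hM x₀)
    (half_pos hε).le fun x hx => ?_).trans_lt hlt
  exact (Real.dist_eq _ _ ▸ hFδ hx).le

end Concentration

lemma one_add_sq_div_two_le_cosh (x : ℝ) : 1 + x ^ 2 / 2 ≤ cosh x := by
  have := sum_le_hasSum (Finset.range 2) (fun n _ => by rw [pow_mul]; positivity) (hasSum_cosh x)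
  simpa [Finset.sum_range_succ] using this

lemma integrable_exp_neg_mul_cosh {μ : ℝ} (hμ : 0 < μ) :
    Integrable fun x => exp (-μ * cosh x) := by
  refine (integrable_exp_neg_mul_sq (half_pos hμ)).mono'
    (by fun_prop) (.of_forall fun x => ?_)
  rw [Real.norm_eq_abs, abs_of_pos (exp_pos _), exp_le_exp]
  nlinarith [one_add_sq_div_two_le_cosh x]

lemma two_mul_K0 (μ : ℝ) : 2 * K0 μ = ∫ x, exp (-μ * cosh x) := by
  rw [K0]; ring

lemma K0_pos {μ : ℝ} (hμ : 0 < μ) : 0 < K0 μ := by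
  have : 0 < ∫ x, exp (-μ * cosh x) := by
    rw [integral_pos_iff_support_of_nonneg (fun x => (exp_pos _).le)
      (integrable_exp_neg_mul_cosh hμ)]
    simp [Function.support, (exp_pos _).ne']
  linarith [two_mul_K0 μ]

lemma mul_exp_neg_mul_cosh_le_two_mul_K0 {μ η : ℝ} (hμ : 0 < μ) (hη : 0 ≤ η) :
    η * exp (-μ * cosh η) ≤ 2 * K0 μ := by
  have hmono : ∀ x ∈ Ioc 0 η, exp (-μ * cosh η) ≤ exp (-μ * cosh x) := fun x hx => by
    have : cosh x ≤ cosh η :=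
      cosh_le_cosh.2 (by rw [abs_of_pos hx.1, abs_of_nonneg hη]; exact hx.2)
    rw [exp_le_exp]; nlinarith
  calc η * exp (-μ * cosh η) = ∫ _ in Ioc 0 η, exp (-μ * cosh η) := by
        rw [setIntegral_const, smul_eq_mul, volume_real_Ioc_of_le hη, sub_zero]
    _ ≤ ∫ x in Ioc 0 η, exp (-μ * cosh x) :=
        setIntegral_mono_on (integrableOn_const measure_Ioc_lt_top.ne)
          (integrable_exp_neg_mul_cosh hμ).integrableOn measurableSet_Ioc hmono
    _ ≤ 2 * K0 μ := two_mul_K0 μ ▸ setIntegral_le_integral (integrable_exp_neg_mul_cosh hμ)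
          (.of_forall fun x => (exp_pos _).le)

lemma setIntegral_compl_ball_exp_neg_mul_cosh_le {μ δ : ℝ} (hμ : 1 ≤ μ) (hδ : 0 ≤ δ) :
    ∫ x in (ball 0 δ)ᶜ, exp (-μ * cosh x) ≤ exp (-(μ - 1) * cosh δ) * (2 * K0 1) := by
  have hfactor : ∀ x ∈ (ball (0 : ℝ) δ)ᶜ,
      exp (-μ * cosh x) ≤ exp (-(μ - 1) * cosh δ) * exp (-1 * cosh x) := fun x hx => by
    have : cosh δ ≤ cosh x := cosh_le_cosh.2 <| by
      simpa [abs_of_nonneg hδ] using hx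
    rw [← exp_add, exp_le_exp]; nlinarith
  have hint := integrable_exp_neg_mul_cosh one_pos
  calc ∫ x in (ball 0 δ)ᶜ, exp (-μ * cosh x)
      ≤ ∫ x in (ball 0 δ)ᶜ, exp (-(μ - 1) * cosh δ) * exp (-1 * cosh x) :=
        setIntegral_mono_on (integrable_exp_neg_mul_cosh (by linarith)).integrableOn
          (hint.const_mul _).integrableOn measurableSet_ball.compl hfactor
    _ = exp (-(μ - 1) * cosh δ) * ∫ x in (ball 0 δ)ᶜ, exp (-1 * cosh x) :=
        integral_const_mul _ _
    _ ≤ exp (-(μ - 1) * cosh δ) * (2 * K0 1) := by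
        rw [two_mul_K0]
        exact mul_le_mul_of_nonneg_left
          (setIntegral_le_integral hint (.of_forall fun x => (exp_pos _).le)) (exp_pos _).le

noncomputable def logGigDensity (μ x : ℝ) : ℝ := (2 * K0 μ)⁻¹ * exp (-μ * cosh x)

lemma logGigDensity_nonneg {μ : ℝ} (hμ : 0 < μ) : 0 ≤ logGigDensity μ := fun x =>
  mul_nonneg (inv_nonneg.2 (by linarith [K0_pos hμ])) (exp_pos _).le

lemma integrable_logGigDensity {μ : ℝ} (hμ : 0 < μ) : Integrable (logGigDensity μ) :=
  (integrable_exp_neg_mul_cosh hμ).const_mul _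

lemma integral_logGigDensity {μ : ℝ} (hμ : 0 < μ) : ∫ x, logGigDensity μ x = 1 := by
  simp only [logGigDensity]
  rw [integral_const_mul, ← two_mul_K0, inv_mul_cancel₀ (by linarith [K0_pos hμ])]

lemma tendsto_setIntegral_compl_ball_logGigDensity {δ : ℝ} (hδ : 0 < δ) :
    Tendsto (fun μ => ∫ x in (ball 0 δ)ᶜ, logGigDensity μ x) atTop (𝓝 0) := by
  set c₀ := cosh (δ / 2)
  set c₁ := cosh δ
  have hc : c₀ < c₁ :=
    cosh_lt_cosh.2 (by rw [abs_of_pos hδ, abs_of_pos (half_pos hδ)]; linarith)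
  have hbound : ∀ μ ≥ 1, ∫ x in (ball 0 δ)ᶜ, logGigDensity μ x ≤
      2 * K0 1 * exp c₁ / (δ / 2) * exp (-(μ * (c₁ - c₀))) := fun μ hμ => by
    have hK0 := mul_exp_neg_mul_cosh_le_two_mul_K0 (by linarith) (half_pos hδ).le (μ := μ)
    calc ∫ x in (ball 0 δ)ᶜ, logGigDensity μ x
        = (2 * K0 μ)⁻¹ * ∫ x in (ball 0 δ)ᶜ, exp (-μ * cosh x) := integral_const_mul _ _
      _ ≤ (δ / 2 * exp (-μ * c₀))⁻¹ * (exp (-(μ - 1) * c₁) * (2 * K0 1)) := by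
        gcongr
        exact setIntegral_compl_ball_exp_neg_mul_cosh_le hμ hδ.le
      _ = 2 * K0 1 * exp c₁ / (δ / 2) * exp (-(μ * (c₁ - c₀))) := by
        rw [show -(μ - 1) * c₁ = c₁ + -(μ * (c₁ - c₀)) + -μ * c₀ by ring,
          exp_add, exp_add]
        field_simp
  refine squeeze_zero' ?_ (eventually_atTop.2 ⟨1, hbound⟩) ?_
  · filter_upwards [eventually_gt_atTop 0] with μ hμ
    exact setIntegral_nonneg measurableSet_ball.compl fun x _ => logGigDensity_nonneg hμ x
  · simpa using (tendsto_exp_neg_atTop_nhds_zero.comp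
      (tendsto_id.atTop_mul_const (sub_pos.2 hc))).const_mul (2 * K0 1 * exp c₁ / (δ / 2))

lemma setIntegral_Ioi_zero_eq_integral_exp_mul (g : ℝ → ℝ) :
    ∫ v in Ioi 0, g v = ∫ x, exp x * g (exp x) := by
  have h := integral_image_eq_integral_abs_deriv_smul MeasurableSet.univ
    (fun x _ => (hasDerivAt_exp x).hasDerivWithinAt) exp_injective.injOn g
  simpa [range_exp, abs_of_pos (exp_pos _)] using h

lemma integral_gig_eq_integral_logGigDensity (μ : ℝ) (f : ℝ → ℝ) :
    ∫ v in Ioi 0, ((2 * K0 μ)⁻¹ * v⁻¹ * exp (-(μ / v + μ * v) / 2)) * f v =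
      ∫ x, logGigDensity μ x * f (exp x) := by
  rw [setIntegral_Ioi_zero_eq_integral_exp_mul]
  congr 1 with x
  have hcosh : -(μ / exp x + μ * exp x) / 2 = -μ * cosh x := by
    rw [cosh_eq, exp_neg]; ring
  rw [hcosh, logGigDensity]
  field_simp

theorem stmt_15 (f : ℝ → ℝ) (hf : ContinuousOn f (Ioi (0:ℝ)))
    (hbdd : ∃ M, ∀ x, |f x| ≤ M) :
    Tendsto (fun μ : ℝ =>
        ∫ v in Ioi (0:ℝ), ((2 * K0 μ)⁻¹ * v⁻¹ * Real.exp (-(μ / v + μ * v) / 2)) * f v)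
      atTop (nhds (f 1)) := by
  obtain ⟨M, hM⟩ := hbdd
  have hF : Continuous fun x => f (exp x) := hf.comp_continuous continuous_exp exp_pos
  simp_rw [integral_gig_eq_integral_logGigDensity]
  have hpos : ∀ᶠ μ : ℝ in atTop, 0 < μ := eventually_gt_atTop 0
  simpa using tendsto_integral_mul_of_tendsto_setIntegral_compl_ball
    (hpos.mono fun μ => logGigDensity_nonneg) (hpos.mono fun μ => integrable_logGigDensity)
    (hpos.mono fun μ => integral_logGigDensity)
    (fun δ => tendsto_setIntegral_compl_ball_logGigDensity)
    hF.aestronglyMeasurable (fun x => hM (exp x)) hF.continuousAt
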